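/- For all partial multifunctions f,g on ℕ with g computably transparent, f ≤_m g if and only if f ≤_W g. Moreover, every partial multifunction f is Weihrauch equivalent to the computably transparent partial multifunction Weih_f (f ≤_W Weih_f and Weih_f ≤_W f). Hence the poset of many-one degrees of computably transparent partial multifunctions on ℕ is isomorphic to the Weihrauch degrees of partial multifunctions on ℕ. -/

import Mathlib

namespace KleeneOracle

/-- `e ∗ x`: application of the `e`-th partial computable function on ℕ. -/
def ap (e x : ℕ) : Part ℕ :=
  Nat.Partrec.Code.eval (Denumerable.ofNat Nat.Partrec.Code e) x

/-- `e ∗ A := {e ∗ a : a ∈ A}`. -/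
def apSet (e : ℕ) (A : Set ℕ) : Set ℕ := {z | ∃ a ∈ A, z ∈ ap e a}

/-- A partial multifunction on ℕ. -/
abbrev Multifun := ℕ → Part (Set ℕ)

def Transparent (U : Multifun) : Prop :=
  ∃ u : ℕ, ∀ (e x : ℕ) (A : Set ℕ), A ∈ U x → (∀ y ∈ A, (ap e y).Dom) →
    ∃ c ∈ ap u e, ∃ d ∈ ap c x, ∃ B ∈ U d, B ⊆ apSet e A

def Inflationary (U : Multifun) : Prop :=
  ∃ η : ℕ, ∀ x : ℕ, ∃ c ∈ ap η x, ∃ B ∈ U c, B ⊆ {x}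

def mcomp (g f : Multifun) : Multifun := fun x =>
  ⟨∃ A ∈ f x, ∀ y ∈ A, (g y).Dom,
   fun _ => {z | ∃ A ∈ f x, ∃ y ∈ A, ∃ B ∈ g y, z ∈ B}⟩

def Idempotent (U : Multifun) : Prop :=
  ∃ μ : ℕ, ∀ (x : ℕ) (A : Set ℕ), A ∈ mcomp U U x →
    ∃ c ∈ ap μ x, ∃ B ∈ U c, B ⊆ A

def mRed (f g : Multifun) : Prop :=
  ∃ e : ℕ, ∀ (x : ℕ) (A : Set ℕ), A ∈ f x →
    ∃ c ∈ ap e x, ∃ B ∈ g c, B ⊆ A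

def wRed (f g : Multifun) : Prop :=
  ∃ em ep : ℕ, ∀ (x : ℕ) (A : Set ℕ), A ∈ f x →
    ∃ c ∈ ap em x, ∃ B ∈ g c, ∀ y ∈ B, ∃ z ∈ ap ep (Nat.pair x y), z ∈ A

def Weih (g : Multifun) : Multifun := fun w =>
  ⟨∃ c ∈ ap w.unpair.1 w.unpair.2.unpair.2, ∃ B ∈ g c,
     ∀ y ∈ B, (ap w.unpair.2.unpair.1 (Nat.pair w.unpair.2.unpair.2 y)).Dom,
   fun _ => {z | ∃ c ∈ ap w.unpair.1 w.unpair.2.unpair.2, ∃ B ∈ g c,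
     ∃ y ∈ B, z ∈ ap w.unpair.2.unpair.1 (Nat.pair w.unpair.2.unpair.2 y)}⟩

def idsq (g : Multifun) : Multifun := fun w =>
  if w.unpair.1 = 0 then Part.some {w.unpair.2}
  else if w.unpair.1 = 1 then g w.unpair.2
  else Part.none

def pWeih (g : Multifun) : Multifun := Weih (idsq g)

def pwRed (f g : Multifun) : Prop := wRed f (idsq g)

def Med (Q : Set ℕ) : Multifun := fun e =>
  ⟨∀ a ∈ Q, (ap e a).Dom, fun _ => apSet e Q⟩

def MedRed (P Q : Set ℕ) : Prop :=
  ∃ e : ℕ, (∀ a ∈ Q, (ap e a).Dom) ∧ apSet e Q ⊆ P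

def constMF (P : Set ℕ) : Multifun := fun _ => Part.some P

def imp (p q : Set ℕ) : Set ℕ := {e | ∀ x ∈ p, ∃ z ∈ ap e x, z ∈ q}

def OpMonotone (j : Set ℕ → Set ℕ) : Prop :=
  ∃ u : ℕ, ∀ p q : Set ℕ, ∀ a ∈ imp p q, ∃ c ∈ ap u a, c ∈ imp (j p) (j q)

def OpInflationary (j : Set ℕ → Set ℕ) : Prop :=
  ∃ e : ℕ, ∀ p : Set ℕ, e ∈ imp p (j p)

def OpIdempotent (j : Set ℕ → Set ℕ) : Prop :=
  ∃ e : ℕ, ∀ p : Set ℕ, e ∈ imp (j (j p)) (j p)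

def LawvereTierney (j : Set ℕ → Set ℕ) : Prop :=
  OpMonotone j ∧ OpInflationary j ∧ OpIdempotent j

def jU (U : Multifun) (p : Set ℕ) : Set ℕ := {x | ∃ A ∈ U x, A ⊆ p}

def SingleValued (U : Multifun) : Prop := ∀ x : ℕ, ∀ A ∈ U x, ∃ y : ℕ, A = {y}

def presInter (j : Set ℕ → Set ℕ) : Prop :=
  ∀ (ι : Type) [Nonempty ι] (p : ι → Set ℕ), j (⋂ i, p i) = ⋂ i, j (p i)

def presUnion (j : Set ℕ → Set ℕ) : Prop :=
  ∀ (ι : Type) (p : ι → Set ℕ), j (⋃ i, p i) = ⋃ i, j (p i)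

def Uop (j : Set ℕ → Set ℕ) : Multifun := fun x =>
  ⟨∃ p : Set ℕ, x ∈ j p, fun _ => ⋂₀ {p : Set ℕ | x ∈ j p}⟩

def mMorphism (e : ℕ) (f g : Multifun) : Prop :=
  ∀ (x : ℕ) (A : Set ℕ), A ∈ f x → ∃ c ∈ ap e x, ∃ B ∈ g c, B ⊆ A

def rMorphism (e : ℕ) (j k : Set ℕ → Set ℕ) : Prop :=
  ∀ p : Set ℕ, e ∈ imp (j p) (k p)

def rRed (j k : Set ℕ → Set ℕ) : Prop := ∃ e : ℕ, rMorphism e j k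


/-!
A Weihrauch reduction `(φ₋, φ₊)` to a transparent `g` collapses to a many-one reduction: the
transparency witness turns the post-processor `y ↦ φ₊⟨x, y⟩` into a pre-processing step, so
`x ↦ (u ∗ φ₊⟨x, ·⟩) ∗ (φ₋ x)` already lands in an instance of `g` all of whose solutions solve
`x`. Conversely `Weih f` is transparent because a post-composition `e ∘ ·` can be absorbed into
the continuation `k` of an instance `⟨h, k, x⟩`, and it is Weihrauch equivalent to `f` since
`⟨id, snd, x⟩` encodes `f x` itself.
-/

section Indices

open Nat.Partrec Nat.Partrec.Code

lemma ap_encode (c : Code) (x : ℕ) : ap (Encodable.encode c) x = eval c x := by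
  simp [ap]

lemma partrec₂_ap : Partrec₂ ap :=
  eval_part.comp ((Computable.ofNat Code).comp Computable.fst) Computable.snd

lemma computable_unpair_fst : Computable fun n : ℕ => n.unpair.1 :=
  Computable.fst.comp Computable.unpair

lemma computable_unpair_snd : Computable fun n : ℕ => n.unpair.2 :=
  Computable.snd.comp Computable.unpair

lemma exists_index {h : ℕ →. ℕ} (hh : Partrec h) : ∃ e, ∀ x, ap e x = h x := by
  obtain ⟨c, hc⟩ := exists_code.1 (Partrec.nat_iff.1 hh)
  exact ⟨Encodable.encode c, fun x => by rw [ap_encode, hc]⟩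

/-- The s-m-n theorem for `ap`. -/
lemma exists_computable_index {h : ℕ → ℕ →. ℕ} (hh : Partrec₂ h) :
    ∃ s : ℕ → ℕ, Computable s ∧ ∀ x y, ap (s x) y = h x y := by
  obtain ⟨c, hc⟩ := exists_code.1 (Partrec₂.unpaired'.2 hh)
  refine ⟨fun x => Encodable.encode (curry c x),
    (Primrec.encode.comp (primrec₂_curry.comp (Primrec.const c) Primrec.id)).to_comp,
    fun x y => ?_⟩
  rw [ap_encode, eval_curry, hc]
  simp

lemma exists_id_index : ∃ e, ∀ x, ap e x = Part.some x :=
  exists_index Computable.id.partrec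

lemma exists_snd_index : ∃ e, ∀ x y, ap e (Nat.pair x y) = Part.some y := by
  obtain ⟨e, he⟩ := exists_index computable_unpair_snd.partrec
  exact ⟨e, fun x y => by simp [he]⟩

lemma exists_comp_index :
    ∃ κ : ℕ → ℕ → ℕ, Computable₂ κ ∧ ∀ e k p, ap (κ e k) p = (ap k p).bind (ap e) := by
  have hcomp : Partrec₂ fun (n p : ℕ) => (ap n.unpair.2 p).bind (ap n.unpair.1) :=
    Partrec.bind (partrec₂_ap.comp (computable_unpair_snd.comp Computable.fst) Computable.snd)
      (partrec₂_ap.comp (computable_unpair_fst.comp (Computable.fst.comp Computable.fst))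
        Computable.snd)
  obtain ⟨s, hs, hsap⟩ := exists_computable_index hcomp
  exact ⟨fun e k => s (Nat.pair e k), hs.comp₂ Primrec₂.natPair.to_comp,
    fun e k p => by simp [hsap]⟩

end Indices

lemma exists_eq_pair_pair (w : ℕ) : ∃ h k x, w = Nat.pair h (Nat.pair k x) :=
  ⟨w.unpair.1, w.unpair.2.unpair.1, w.unpair.2.unpair.2, by simp⟩

lemma mem_Weih_pair_pair {g : Multifun} {h k x : ℕ} {A : Set ℕ} :
    A ∈ Weih g (Nat.pair h (Nat.pair k x)) ↔
      ∃ c ∈ ap h x, ∃ B ∈ g c, (∀ y ∈ B, (ap k (Nat.pair x y)).Dom) ∧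
        A = {z | ∃ y ∈ B, z ∈ ap k (Nat.pair x y)} := by
  have hval : ∀ c ∈ ap h x, ∀ B ∈ g c,
      {z | ∃ c ∈ ap h x, ∃ B ∈ g c, ∃ y ∈ B, z ∈ ap k (Nat.pair x y)} =
        {z | ∃ y ∈ B, z ∈ ap k (Nat.pair x y)} := fun c hc B hB =>
    Set.ext fun z => ⟨fun ⟨c', hc', B', hB', hz⟩ => by
      obtain rfl := Part.mem_unique hc' hc
      obtain rfl := Part.mem_unique hB' hB
      exact hz, fun ⟨y, hy, hz⟩ => ⟨c, hc, B, hB, y, hy, hz⟩⟩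
  simp only [Weih, Nat.unpair_pair, Part.mem_mk_iff]
  constructor
  · rintro ⟨⟨c, hc, B, hB, hdom⟩, rfl⟩
    exact ⟨c, hc, B, hB, hdom, hval c hc B hB⟩
  · rintro ⟨c, hc, B, hB, hdom, rfl⟩
    exact ⟨⟨c, hc, B, hB, hdom⟩, hval c hc B hB⟩

lemma mRed.wRed {f g : Multifun} (h : mRed f g) : wRed f g := by
  obtain ⟨e, he⟩ := h
  obtain ⟨snd, hsnd⟩ := exists_snd_index
  refine ⟨e, snd, fun x A hA => ?_⟩
  obtain ⟨c, hc, B, hB, hBA⟩ := he x A hA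
  exact ⟨c, hc, B, hB, fun y hy => ⟨y, by simp [hsnd], hBA hy⟩⟩

lemma wRed.mRed_of_transparent {f g : Multifun} (hg : Transparent g) (h : wRed f g) :
    mRed f g := by
  obtain ⟨u, hu⟩ := hg
  obtain ⟨em, ep, hw⟩ := h
  have hpost : Partrec₂ fun x y => ap ep (Nat.pair x y) :=
    partrec₂_ap.comp (Computable.const ep) Primrec₂.natPair.to_comp
  obtain ⟨s, hs, hsap⟩ := exists_computable_index hpost
  have hred : Partrec fun x => (ap em x).bind fun c => (ap u (s x)).bind fun c' => ap c' c :=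
    Partrec.bind (partrec₂_ap.comp (Computable.const em) Computable.id) <|
      Partrec.bind (partrec₂_ap.comp (Computable.const u) (hs.comp Computable.fst)) <|
        partrec₂_ap.comp Computable.snd (Computable.snd.comp Computable.fst)
  obtain ⟨E, hE⟩ := exists_index hred
  refine ⟨E, fun x A hA => ?_⟩
  obtain ⟨c, hc, B, hB, hBA⟩ := hw x A hA
  have hdom : ∀ y ∈ B, (ap (s x) y).Dom := fun y hy => by
    obtain ⟨z, hz, -⟩ := hBA y hy
    exact Part.dom_iff_mem.2 ⟨z, by rwa [hsap]⟩
  obtain ⟨c', hc', d, hd, B', hB', hB'B⟩ := hu (s x) c B hB hdom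
  refine ⟨d, by simpa [hE] using ⟨c, hc, c', hc', hd⟩, B', hB', fun z hz => ?_⟩
  obtain ⟨y, hy, hzy⟩ := hB'B hz
  obtain ⟨z', hz', hz'A⟩ := hBA y hy
  rw [hsap] at hzy
  rwa [Part.mem_unique hzy hz']

lemma transparent_Weih (g : Multifun) : Transparent (Weih g) := by
  obtain ⟨κ, hκ, hκap⟩ := exists_comp_index
  have hpost : Computable₂ fun e w : ℕ =>
      Nat.pair w.unpair.1 (Nat.pair (κ e w.unpair.2.unpair.1) w.unpair.2.unpair.2) :=
    Primrec₂.natPair.to_comp.comp₂ (computable_unpair_fst.comp Computable.snd) <|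
      Primrec₂.natPair.to_comp.comp₂
        (hκ.comp₂ Computable.fst <|
          computable_unpair_fst.comp (computable_unpair_snd.comp Computable.snd))
        (computable_unpair_snd.comp (computable_unpair_snd.comp Computable.snd))
  obtain ⟨s, hs, hsap⟩ := exists_computable_index hpost.partrec₂
  obtain ⟨u, hu⟩ := exists_index hs.partrec
  refine ⟨u, fun e w A hA hAe => ⟨s e, by simp [hu], ?_⟩⟩
  obtain ⟨h, k, x, rfl⟩ := exists_eq_pair_pair w
  obtain ⟨c, hc, B, hB, hdom, rfl⟩ := mem_Weih_pair_pair.1 hA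
  refine ⟨Nat.pair h (Nat.pair (κ e k) x), by simp [hsap], _,
    mem_Weih_pair_pair.2 ⟨c, hc, B, hB, fun y hy => ?_, rfl⟩, ?_⟩
  · obtain ⟨v, hv⟩ := Part.dom_iff_mem.1 (hdom y hy)
    obtain ⟨z, hz⟩ := Part.dom_iff_mem.1 (hAe v ⟨y, hy, hv⟩)
    exact Part.dom_iff_mem.2 ⟨z, by simpa [hκap] using ⟨v, hv, hz⟩⟩
  · rintro z ⟨y, hy, hz⟩
    rw [hκap, Part.mem_bind_iff] at hz
    obtain ⟨v, hv, hzv⟩ := hz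
    exact ⟨v, ⟨y, hy, hv⟩, hzv⟩

lemma mRed_Weih (f : Multifun) : mRed f (Weih f) := by
  obtain ⟨i, hi⟩ := exists_id_index
  obtain ⟨snd, hsnd⟩ := exists_snd_index
  obtain ⟨em, hem⟩ := exists_index
    (Primrec₂.natPair.comp (Primrec.const i)
      (Primrec₂.natPair.comp (Primrec.const snd) Primrec.id)).to_comp.partrec
  refine ⟨em, fun x A hA => ⟨Nat.pair i (Nat.pair snd x), by simp [hem], A, mem_Weih_pair_pair.2
    ⟨x, by simp [hi], A, hA, fun y _ => by simp [hsnd], ?_⟩, subset_rfl⟩⟩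
  ext z
  simp [hsnd]

lemma wRed_Weih (f : Multifun) : wRed f (Weih f) :=
  (mRed_Weih f).wRed

lemma Weih_wRed (f : Multifun) : wRed (Weih f) f := by
  obtain ⟨em, hem⟩ := exists_index <| partrec₂_ap.comp computable_unpair_fst
    (computable_unpair_snd.comp computable_unpair_snd)
  obtain ⟨ep, hep⟩ := exists_index <| partrec₂_ap.comp
    (computable_unpair_fst.comp (computable_unpair_snd.comp computable_unpair_fst))
    (Primrec₂.natPair.to_comp.comp
      (computable_unpair_snd.comp (computable_unpair_snd.comp computable_unpair_fst))
      computable_unpair_snd)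
  refine ⟨em, ep, fun w A hA => ?_⟩
  obtain ⟨h, k, x, rfl⟩ := exists_eq_pair_pair w
  obtain ⟨c, hc, B, hB, hdom, rfl⟩ := mem_Weih_pair_pair.1 hA
  refine ⟨c, by simpa [hem] using hc, B, hB, fun y hy => ?_⟩
  obtain ⟨z, hz⟩ := Part.dom_iff_mem.1 (hdom y hy)
  exact ⟨z, by simpa [hep] using hz, y, hy, hz⟩

/-- For `g` computably transparent, `f ≤_m g ↔ f ≤_W g`; moreover every
`f` is Weihrauch equivalent to the computably transparent `Weih f`.  Hence the poset of
many-one degrees of computably transparent partial multifunctions is isomorphic to the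
Weihrauch degrees. -/
theorem transparent_manyone_eq_weihrauch :
    (∀ f g : Multifun, Transparent g → (mRed f g ↔ wRed f g)) ∧
    (∀ f : Multifun, Transparent (Weih f) ∧ wRed f (Weih f) ∧ wRed (Weih f) f) :=
  ⟨fun _ _ hg => ⟨mRed.wRed, wRed.mRed_of_transparent hg⟩,
    fun f => ⟨transparent_Weih f, wRed_Weih f, Weih_wRed f⟩⟩

end KleeneOracle
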